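/- arXiv:2210.12038 — 3 statements merged into one kernel-verified Lean document; each statement's English description precedes it below -/
import Mathlib

section
/- Let (M,d) be a compact metric space and let {X_t}_{t∈ℝ} be a continuous flow on M which is kinematic expansive, i.e., for every ε > 0 there exists δ > 0 such that whenever x, y ∈ M satisfy d(X_t(x), X_t(y)) ≤ δ for all t ∈ ℝ, then y ∈ X_{[-ε,ε]}(x). Then the time-one map X_1 is entropy-expansive: there exists δ > 0 such that h_top(X_1, B^∞_δ(x, X_1)) = 0 for every x ∈ M. -/
/-!
By kinematic expansivity, a point whose `X 1`-orbit stays `δ`-close to that of `x` at all integer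
times (hence, by uniform continuity of the flow over `[0, 1]`, close at all real times) lies on the
orbit segment `X_{[-1,1]}(x)`. So each `δ`-infinite dynamical ball lies in an orbit segment, and an
orbit segment has zero entropy: a point `X u x` is shadowed by `X v x` for all times once `|u - v|`
is small, so finitely many orbits cover the segment at every scale, independently of the length.
-/

open Set Topology Uniformity Dynamics

lemma Dynamics.coverEntropy_le_zero_of_forall_isDynCoverOf {X : Type*} [UniformSpace X]
    {T : X → X} {F : Set X} (h : ∀ U ∈ 𝓤 X, ∃ s : Finset X, ∀ n, IsDynCoverOf T F U n s) :
    coverEntropy T F ≤ 0 := by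
  refine iSup₂_le fun U hU => ?_
  obtain ⟨s, hs⟩ := h U hU
  -- `+ 1` keeps the constant bound nonzero, as `expGrowthSup_const` requires.
  have hbound : (fun n => (coverMincard T F U n : ENNReal)) ≤ fun _ => (s.card + 1 : ENNReal) :=
    fun n => calc (coverMincard T F U n : ENNReal)
        _ ≤ s.card := by exact_mod_cast (hs n).coverMincard_le_card
        _ ≤ s.card + 1 := le_self_add
  exact (ExpGrowth.expGrowthSup_monotone hbound).trans
    (ExpGrowth.expGrowthSup_const (by simp) (by simp)).le

namespace Flow

variable {M : Type*}

section Topological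

variable [TopologicalSpace M] (ϕ : Flow ℝ M)

theorem iterate_one (k : ℕ) : (ϕ 1)^[k] = ϕ k := by
  induction k with
  | zero => simp [map_zero]
  | succ k ih =>
    funext x
    rw [Function.iterate_succ_apply', ih, Nat.cast_succ, add_comm, map_add]

end Topological

section Compact

variable [UniformSpace M] [CompactSpace M] (ϕ : Flow ℝ M)

theorem tendstoUniformly_nhds_zero : TendstoUniformly (fun t => ϕ t) id (𝓝 0) := by
  simpa only [← ϕ.map_zero] using Continuous.tendstoUniformly ϕ.toFun ϕ.cont' 0

theorem coverEntropy_image_le_zero {K : Set ℝ} (hK : IsCompact K) (x : M) :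
    coverEntropy (ϕ 1) ((fun t => ϕ t x) '' K) ≤ 0 := by
  classical
  refine coverEntropy_le_zero_of_forall_isDynCoverOf fun U hU => ?_
  have hsmall : {t | ∀ w, (w, ϕ t w) ∈ U} ∈ 𝓝 (0 : ℝ) := ϕ.tendstoUniformly_nhds_zero U hU
  obtain ⟨N, -, hKN⟩ := hK.elim_nhds_subcover (fun v => (v - ·) ⁻¹' {t | ∀ w, (w, ϕ t w) ∈ U})
    fun v _ => ContinuousAt.preimage_mem_nhds (by fun_prop) (by simpa using hsmall)
  refine ⟨N.image (fun v => ϕ v x), fun n y hy => ?_⟩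
  obtain ⟨u, huK, rfl⟩ := hy
  obtain ⟨v, hvN, huv⟩ := mem_iUnion₂.1 (hKN huK)
  refine ⟨ϕ v x, by simpa using ⟨v, hvN, rfl⟩, mem_dynEntourage.2 fun k _ => ?_⟩
  have hshift : ϕ k (ϕ v x) = ϕ (v - u) (ϕ k (ϕ u x)) := by
    simp only [← map_add]
    ring_nf
  rw [iterate_one, hshift]
  exact huv _

end Compact

section Metric

variable [PseudoMetricSpace M] [CompactSpace M] (ϕ : Flow ℝ M)

theorem exists_forall_dist_lt_of_forall_int_dist_le {η : ℝ} (hη : 0 < η) :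
    ∃ δ > 0, ∀ x y, (∀ n : ℤ, dist (ϕ n x) (ϕ n y) ≤ δ) → ∀ t, dist (ϕ t x) (ϕ t y) < η := by
  have hK : IsCompact (Icc (0 : ℝ) 1 ×ˢ (univ : Set M)) := isCompact_Icc.prod isCompact_univ
  obtain ⟨δ, hδ, hϕ⟩ := Metric.uniformContinuousOn_iff.1
    (hK.uniformContinuousOn_of_continuous ϕ.cont'.continuousOn) η hη
  refine ⟨δ / 2, half_pos hδ, fun x y hxy t => ?_⟩
  have hfrac : t - ⌊t⌋ ∈ Icc (0 : ℝ) 1 :=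
    ⟨by linarith [Int.floor_le t], by linarith [Int.lt_floor_add_one t]⟩
  have hshift : ∀ z, ϕ t z = ϕ (t - ⌊t⌋) (ϕ ⌊t⌋ z) := fun z => by rw [← map_add, sub_add_cancel]
  rw [hshift, hshift]
  refine hϕ (t - ⌊t⌋, ϕ ⌊t⌋ x) ⟨hfrac, trivial⟩ (t - ⌊t⌋, ϕ ⌊t⌋ y) ⟨hfrac, trivial⟩ ?_
  simpa [Prod.dist_eq, hδ] using (hxy ⌊t⌋).trans_lt (half_lt_self hδ)

end Metric

end Flow

/-- A kinematic expansive continuous flow on a compact metric space has an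
entropy-expansive time-one map: there is `δ > 0` such that the topological entropy of `X 1`
on every `δ`-infinite dynamical ball `B^∞_δ(x, X 1)` is zero. -/
theorem kinematicExpansive_implies_timeOne_entropyExpansive
    {M : Type*} [MetricSpace M] [CompactSpace M]
    (X : ℝ → M → M)
    (hcont : Continuous fun p : ℝ × M => X p.1 p.2)
    (hX0 : ∀ x : M, X 0 x = x)
    (hXadd : ∀ t s : ℝ, ∀ x : M, X (t + s) x = X t (X s x))
    (hkin : ∀ ε : ℝ, 0 < ε → ∃ δ : ℝ, 0 < δ ∧ ∀ x y : M,
      (∀ t : ℝ, dist (X t x) (X t y) ≤ δ) →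
      y ∈ (fun s : ℝ => X s x) '' Set.Icc (-ε) ε) :
    ∃ δ : ℝ, 0 < δ ∧ ∀ x : M,
      Dynamics.coverEntropy (X 1)
        {y : M | ∀ n : ℤ, dist (X (n : ℝ) x) (X (n : ℝ) y) ≤ δ} = 0 := by
  let ϕ : Flow ℝ M := ⟨X, hcont, hXadd, hX0⟩
  obtain ⟨δ₁, hδ₁, hkin₁⟩ := hkin 1 one_pos
  obtain ⟨δ, hδ, hshadow⟩ := ϕ.exists_forall_dist_lt_of_forall_int_dist_le hδ₁
  refine ⟨δ, hδ, fun x => le_antisymm ?_ (coverEntropy_nonneg _ ⟨x, fun n => by simp [hδ.le]⟩)⟩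
  have hball : {y | ∀ n : ℤ, dist (X n x) (X n y) ≤ δ} ⊆ (fun s => X s x) '' Icc (-1) 1 :=
    fun y hy => hkin₁ x y fun t => (hshadow x y hy t).le
  exact (coverEntropy_monotone _ hball).trans (ϕ.coverEntropy_image_le_zero isCompact_Icc x)
end

section
/- Let (M,d) be a compact metric space and let {X_t}_{t∈ℝ} be a continuous flow on M which is kinematic expansive, i.e., for every ε > 0 there exists δ > 0 such that whenever x, y ∈ M satisfy d(X_t(x), X_t(y)) ≤ δ for all t ∈ ℝ, then y ∈ X_{[-ε,ε]}(x). Then for every ε > 0 there exists β > 0 such that for every x ∈ M the β-infinite dynamical ball of x for the time-one map is contained in the orbit segment of x: B^∞_β(x, X_1) ⊆ X_{[-ε,ε]}(x). -/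
/-- For a kinematic expansive continuous flow on a compact metric space, for
every `ε > 0` there is `β > 0` such that for every `x`, the `β`-infinite dynamical ball of
`x` for the time-one map is contained in the orbit segment `X_{[-ε,ε]}(x)`. -/
theorem kinematicExpansive_dynamical_ball_subset_orbit_segment
    {M : Type*} [MetricSpace M] [CompactSpace M]
    (X : ℝ → M → M)
    (hcont : Continuous fun p : ℝ × M => X p.1 p.2)
    (hX0 : ∀ x : M, X 0 x = x)
    (hXadd : ∀ t s : ℝ, ∀ x : M, X (t + s) x = X t (X s x))
    (hkin : ∀ ε : ℝ, 0 < ε → ∃ δ : ℝ, 0 < δ ∧ ∀ x y : M,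
      (∀ t : ℝ, dist (X t x) (X t y) ≤ δ) →
      y ∈ (fun s : ℝ => X s x) '' Set.Icc (-ε) ε) :
    ∀ ε : ℝ, 0 < ε → ∃ β : ℝ, 0 < β ∧ ∀ x : M,
      {y : M | ∀ n : ℤ, dist (X (n : ℝ) x) (X (n : ℝ) y) ≤ β} ⊆
        (fun s : ℝ => X s x) '' Set.Icc (-ε) ε := by
  intro ε hε
  obtain ⟨δ, hδ, hδ'⟩ := hkin ε hε
  -- uniform continuity on the compact set [0,1] × M
  have hK : IsCompact ((Set.Icc (0:ℝ) 1) ×ˢ (Set.univ : Set M)) :=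
    isCompact_Icc.prod isCompact_univ
  have huc : UniformContinuousOn (fun p : ℝ × M => X p.1 p.2)
      ((Set.Icc (0:ℝ) 1) ×ˢ (Set.univ : Set M)) :=
    hK.uniformContinuousOn_of_continuous hcont.continuousOn
  rw [Metric.uniformContinuousOn_iff] at huc
  obtain ⟨η, hη, hη'⟩ := huc δ hδ
  refine ⟨η / 2, by linarith, fun x y hy => ?_⟩
  apply hδ' x y
  intro t
  have hs1 : (0:ℝ) ≤ t - ⌊t⌋ := sub_nonneg.2 (Int.floor_le t)
  have hs2 : t - ⌊t⌋ ≤ 1 := by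
    have := Int.lt_floor_add_one t
    linarith
  have key : ∀ z : M, X t z = X (t - ⌊t⌋) (X (⌊t⌋ : ℝ) z) := by
    intro z
    rw [← hXadd]
    ring_nf
  rw [key x, key y]
  have hd : dist (X (⌊t⌋ : ℝ) x) (X (⌊t⌋ : ℝ) y) ≤ η / 2 := hy ⌊t⌋
  have := hη' (t - ⌊t⌋, X (⌊t⌋ : ℝ) x) ⟨⟨hs1, hs2⟩, Set.mem_univ _⟩
      (t - ⌊t⌋, X (⌊t⌋ : ℝ) y) ⟨⟨hs1, hs2⟩, Set.mem_univ _⟩ ?_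
  · exact le_of_lt this
  · rw [Prod.dist_eq]
    simp only [dist_self]
    refine max_lt hη ?_ |>.trans_le le_rfl
    linarith
end

section
/- Let {X_t}_{t∈ℝ} be a continuous flow on a metric space M, let V ⊆ M, let T₀ > 0 and ρ ≤ 0, and let φ : M × [0,∞) → ℝ be an additive cocycle over the flow, i.e. φ(x, t+s) = φ(x, t) + φ(X_t(x), s) for all x ∈ M and t, s ≥ 0 (in particular φ(x,0) = 0). Assume that φ(y, s) ≥ ρ whenever 0 ≤ s ≤ T₀ and X_u(y) ∈ V for all u ∈ [0, s]. Then for every x ∈ M and every t ≥ 0 such that X_u(x) ∈ V for all u ∈ [0, t], one has φ(x, t) ≥ (ρ/T₀)·t + ρ. -/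
/-- Let `φ` be an additive cocycle over a continuous flow `X` on a metric
space `M`, let `V ⊆ M`, `T₀ > 0` and `ρ ≤ 0`. If `φ(y,s) ≥ ρ` whenever `0 ≤ s ≤ T₀` and the
orbit segment of `y` up to time `s` stays in `V`, then for every `x` and `t ≥ 0` whose orbit
segment up to time `t` stays in `V`, one has `φ(x,t) ≥ (ρ/T₀)·t + ρ`. -/
theorem cocycle_lower_bound_while_in_neighborhood
    {M : Type*} [MetricSpace M]
    (X : ℝ → M → M)
    (hcont : Continuous fun p : ℝ × M => X p.1 p.2)
    (hX0 : ∀ x : M, X 0 x = x)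
    (hXadd : ∀ t s : ℝ, ∀ x : M, X (t + s) x = X t (X s x))
    (V : Set M) (T₀ ρ : ℝ) (hT₀ : 0 < T₀) (hρ : ρ ≤ 0)
    (φ : M → ℝ → ℝ)
    (hcoc : ∀ x : M, ∀ t s : ℝ, 0 ≤ t → 0 ≤ s → φ x (t + s) = φ x t + φ (X t x) s)
    (hshort : ∀ y : M, ∀ s : ℝ, 0 ≤ s → s ≤ T₀ →
      (∀ u : ℝ, 0 ≤ u → u ≤ s → X u y ∈ V) → ρ ≤ φ y s) :
    ∀ x : M, ∀ t : ℝ, 0 ≤ t →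
      (∀ u : ℝ, 0 ≤ u → u ≤ t → X u x ∈ V) →
      (ρ / T₀) * t + ρ ≤ φ x t := by
  have key : ∀ n : ℕ, ∀ x : M, ∀ t : ℝ, 0 ≤ t → t ≤ n * T₀ →
      (∀ u : ℝ, 0 ≤ u → u ≤ t → X u x ∈ V) → (ρ / T₀) * t + ρ ≤ φ x t := by
    intro n
    induction n with
    | zero =>
      intro x t ht ht' hV
      have ht0 : t = 0 := le_antisymm (by simpa using ht') ht
      subst ht0
      have h0 : φ x 0 = 0 := by
        have := hcoc x 0 0 le_rfl le_rfl
        rw [hX0 x] at this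
        simpa using this.symm
      simp [h0, hρ]
    | succ n ih =>
      intro x t ht ht' hV
      by_cases hle : t ≤ T₀
      · have h1 : ρ ≤ φ x t := hshort x t ht hle hV
        have h2 : (ρ / T₀) * t ≤ 0 :=
          mul_nonpos_of_nonpos_of_nonneg (div_nonpos_of_nonpos_of_nonneg hρ hT₀.le) ht
        linarith
      · push_neg at hle
        have hsub : 0 ≤ t - T₀ := by linarith
        have hsub' : t - T₀ ≤ n * T₀ := by
          have : t ≤ (n + 1 : ℕ) * T₀ := ht'
          push_cast at this ⊢
          linarith
        have hV1 : ∀ u : ℝ, 0 ≤ u → u ≤ T₀ → X u x ∈ V :=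
          fun u hu hu' => hV u hu (by linarith)
        have hV2 : ∀ u : ℝ, 0 ≤ u → u ≤ t - T₀ → X u (X T₀ x) ∈ V := by
          intro u hu hu'
          rw [← hXadd u T₀ x]
          exact hV (u + T₀) (by linarith) (by linarith)
        have hshort1 : ρ ≤ φ x T₀ := hshort x T₀ hT₀.le le_rfl hV1
        have hrec : (ρ / T₀) * (t - T₀) + ρ ≤ φ (X T₀ x) (t - T₀) :=
          ih (X T₀ x) (t - T₀) hsub hsub' hV2
        have hsplit : φ x t = φ x T₀ + φ (X T₀ x) (t - T₀) := by
          have := hcoc x T₀ (t - T₀) hT₀.le hsub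
          rw [show T₀ + (t - T₀) = t by ring] at this
          exact this
        have hdiv : (ρ / T₀) * T₀ = ρ := div_mul_cancel₀ ρ hT₀.ne'
        rw [hsplit]
        nlinarith [hdiv]
  intro x t ht hV
  obtain ⟨n, hn⟩ := exists_nat_ge (t / T₀)
  have : t ≤ n * T₀ := by
    rw [div_le_iff₀ hT₀] at hn
    exact hn
  exact key n x t ht this hV
end
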